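/- arXiv:1605.09676 — 2 statements merged into one kernel-verified Lean document; each statement's English description precedes it below -/
import Mathlib

section
/- Let a : ℝ → ℝ be continuous with a(x) ≥ a₀ > 0, and r : ℂ → ℂ globally Lipschitz. For each ε > 0 consider the differential equation ∂_s W̃(s) = Φ^ε(s, W̃(s)) in the Banach space L^∞_{τ,x} of bounded functions of (x,τ), where Φ^ε(s, w)(x,τ) = −(1/a(x̃)) e^{−iτ̃} r(e^{iτ̃} w(x,τ)) with x̃ = A⁻¹(A(x)+cs), τ̃ = τ + s/ε. Then for every bounded initial datum W̃(0) this equation has a unique global solution on [0, T̄], and there exists C > 0 depending only on T̄, a₀ and the Lipschitz data of r (in particular independent of ε) such that sup_{ε > 0} ‖W̃(s)‖_{L^∞_{τ,x}} ≤ C (1 + ‖W̃(0)‖_{L^∞_{τ,x}}) for all s ∈ [0, T̄]. -/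
/-!
For fixed `(x, τ)` the filtered profile equation is a scalar ODE `α' = v(s, α)` whose right-hand
side `v(s, z) = -(1/a(x̃)) e^{-iτ̃} r(e^{iτ̃} z)` is `L/a₀`-Lipschitz in `z` and satisfies
`‖v(s, z)‖ ≤ (L/a₀)‖z‖ + ‖r 0‖/a₀`, uniformly in `x, τ, s` and `ε`, because `|e^{iτ̃}| = 1` and
`a ≥ a₀`. Grönwall's lemma turns this linear growth into the bound `‖α s‖ ≤ C (1 + ‖α 0‖)`, with
`C` independent of `ε`; the same a priori bound makes the Cauchy–Lipschitz solution of the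
equation truncated outside a large ball a global solution, and uniqueness is Grönwall again.
Continuity in `s` of `v` needs the characteristic `A⁻¹`, which is continuous since
`A y - A x ≥ a₀ (y - x)`.
-/

open Set Function Filter
open scoped NNReal

lemma LipschitzWith.norm_le_mul_norm_add {E F : Type*} [SeminormedAddCommGroup E]
    [SeminormedAddCommGroup F] {K : ℝ≥0} {f : E → F} (hf : LipschitzWith K f) (x : E) :
    ‖f x‖ ≤ K * ‖x‖ + ‖f 0‖ := by
  have h := hf.dist_le_mul x 0
  rw [dist_eq_norm, dist_eq_norm, sub_zero] at h
  linarith [norm_sub_norm_le (f x) (f 0)]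

section BallRetraction

variable {E : Type*} [NormedAddCommGroup E] [NormedSpace ℝ E] {R : ℝ}

noncomputable def ballRetraction (R : ℝ) (x : E) : E := (R / max R ‖x‖) • x

lemma ballRetraction_of_norm_le (hR : 0 < R) {x : E} (hx : ‖x‖ ≤ R) :
    ballRetraction R x = x := by
  rw [ballRetraction, max_eq_left hx, div_self hR.ne', one_smul]

lemma norm_ballRetraction_le (hR : 0 < R) (x : E) : ‖ballRetraction R x‖ ≤ min R ‖x‖ := by
  have hm : 0 < max R ‖x‖ := lt_max_of_lt_left hR
  rw [ballRetraction, norm_smul, Real.norm_of_nonneg (by positivity), le_min_iff,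
    div_mul_eq_mul_div, div_le_iff₀ hm, div_le_iff₀ hm]
  exact ⟨by gcongr; exact le_max_right _ _, by rw [mul_comm]; gcongr; exact le_max_left _ _⟩

/-- With `m x = max R ‖x‖`, split
`x / m x - y / m y = (x - y) / m x + (m y - m x) / (m x * m y) • y`; since `m` is
`1`-Lipschitz, `R ≤ m x` and `‖y‖ ≤ m y`, each term is at most `‖x - y‖`. -/
lemma lipschitzWith_ballRetraction (hR : 0 < R) :
    LipschitzWith 2 (ballRetraction (E := E) R) := by
  refine LipschitzWith.of_dist_le_mul fun x y => ?_
  set m : E → ℝ := fun z => max R ‖z‖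
  have hm : ∀ z, 0 < m z := fun z => lt_max_of_lt_left hR
  have hRm : ∀ z, R ≤ m z := fun z => le_max_left _ _
  have hnorm_m : ‖y‖ ≤ m y := le_max_right _ _
  have hm_lip : |m y - m x| ≤ ‖x - y‖ := by
    have h := (lipschitzWith_one_norm.const_max R).dist_le_mul y x
    rwa [Real.dist_eq, dist_eq_norm, norm_sub_rev, NNReal.coe_one, one_mul] at h
  have hsplit : ballRetraction R x - ballRetraction R y
      = (R / m x) • (x - y) + (R * (m y - m x) / (m x * m y)) • y := by
    have hcoef : R / m y = R / m x - R * (m y - m x) / (m x * m y) := by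
      field_simp [(hm x).ne', (hm y).ne']; ring
    show (R / m x) • x - (R / m y) • y = _
    rw [hcoef, sub_smul, smul_sub]; abel
  have h1 : ‖(R / m x) • (x - y)‖ ≤ ‖x - y‖ := by
    rw [norm_smul, Real.norm_of_nonneg (div_nonneg hR.le (hm x).le)]
    exact mul_le_of_le_one_left (norm_nonneg _) ((div_le_one (hm x)).2 (hRm x))
  have h2 : ‖(R * (m y - m x) / (m x * m y)) • y‖ ≤ ‖x - y‖ := by
    have hmxy := mul_pos (hm x) (hm y)
    rw [norm_smul, Real.norm_eq_abs, abs_div, abs_mul, abs_of_pos hR, abs_of_pos hmxy,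
      div_mul_eq_mul_div, div_le_iff₀ hmxy]
    calc R * |m y - m x| * ‖y‖ ≤ m x * ‖x - y‖ * m y := by gcongr; exact hRm x
      _ = ‖x - y‖ * (m x * m y) := by ring
  rw [dist_eq_norm, dist_eq_norm, hsplit, NNReal.coe_ofNat, two_mul]
  exact (norm_add_le _ _).trans (add_le_add h1 h2)

end BallRetraction

section GlobalSolutions

variable {E : Type*} [NormedAddCommGroup E] [NormedSpace ℝ E] {v : ℝ → E → E} {K : ℝ≥0}

theorem exists_forall_mem_Icc_hasDerivAt_of_norm_le [CompleteSpace E] {L : ℝ≥0}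
    (hcont : ∀ x, Continuous (v · x)) (hlip : ∀ t, LipschitzWith K (v t))
    (hbound : ∀ t x, ‖v t x‖ ≤ L) (x₀ : E) (T : ℝ) :
    ∃ α : ℝ → E, α 0 = x₀ ∧ ∀ t ∈ Icc 0 T, HasDerivAt α (v t (α t)) t := by
  set S := max T 0 + 1
  have hS : 0 < S := by positivity
  have h0 : (0 : ℝ) ∈ Icc (-1) S := ⟨by norm_num, hS.le⟩
  have hPL : IsPicardLindelof v (tmin := -1) (tmax := S) ⟨0, h0⟩ x₀ (L * S.toNNReal) 0 L K :=
    { lipschitzOnWith := fun t _ => (hlip t).lipschitzOnWith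
      continuousOn := fun x _ => (hcont x).continuousOn
      norm_le := fun t _ x _ => hbound t x
      mul_max_le := by
        simp [Real.coe_toNNReal _ hS.le, max_eq_left (show (1 : ℝ) ≤ S by simp [S])] }
  obtain ⟨α, hα0, hα⟩ := hPL.exists_eq_forall_mem_Icc_hasDerivWithinAt₀
  refine ⟨α, hα0, fun t ht => (hα t ?_).hasDerivAt (Icc_mem_nhds ?_ ?_)⟩ <;>
    simp only [mem_Icc, S] at ht ⊢ <;> grind

theorem norm_le_gronwallBound_of_hasDerivAt {k ρ δ : ℝ} (hv : ∀ t x, ‖v t x‖ ≤ k * ‖x‖ + ρ)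
    {α : ℝ → E} {T : ℝ} (hα : ∀ t ∈ Icc 0 T, HasDerivAt α (v t (α t)) t) (h0 : ‖α 0‖ ≤ δ) :
    ∀ t ∈ Icc 0 T, ‖α t‖ ≤ gronwallBound δ k ρ t := by
  intro t ht
  simpa using norm_le_gronwallBound_of_norm_deriv_right_le
    (fun s hs => (hα s hs).continuousAt.continuousWithinAt)
    (fun s hs => (hα s (Ico_subset_Icc_self hs)).hasDerivWithinAt) h0
    (fun s _ => hv s (α s)) t ht

lemma gronwallBound_le_mul_one_add {δ K ε x : ℝ} (hδ : 0 ≤ δ) (hK : 0 ≤ K) (hε : 0 ≤ ε)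
    (hx : 0 ≤ x) : gronwallBound δ K ε x ≤ gronwallBound 1 K ε x * (1 + δ) := by
  unfold gronwallBound
  split_ifs with hK0
  · nlinarith [mul_nonneg (mul_nonneg hε hx) hδ]
  · have hE : 1 ≤ Real.exp (K * x) := Real.one_le_exp (by positivity)
    have hεK : 0 ≤ ε / K := by positivity
    nlinarith [mul_nonneg (mul_nonneg hεK (sub_nonneg.2 hE)) hδ]

theorem norm_le_gronwallBound_one_mul_of_hasDerivAt {k ρ M T : ℝ} (hk : 0 ≤ k) (hρ : 0 ≤ ρ)
    (hv : ∀ t x, ‖v t x‖ ≤ k * ‖x‖ + ρ) {α : ℝ → E}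
    (hα : ∀ t ∈ Icc 0 T, HasDerivAt α (v t (α t)) t) (h0 : ‖α 0‖ ≤ M) :
    ∀ t ∈ Icc 0 T, ‖α t‖ ≤ gronwallBound 1 k ρ T * (1 + M) := fun t ht =>
  have hM : 0 ≤ M := (norm_nonneg _).trans h0
  (norm_le_gronwallBound_of_hasDerivAt hv hα h0 t ht).trans <|
    (gronwallBound_mono hM hρ hk ht.2).trans
      (gronwallBound_le_mul_one_add hM hk hρ (ht.1.trans ht.2))

theorem eqOn_Icc_of_hasDerivAt (hlip : ∀ t, LipschitzWith K (v t)) {α β : ℝ → E} {a b : ℝ}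
    (hα : ∀ t ∈ Icc a b, HasDerivAt α (v t (α t)) t)
    (hβ : ∀ t ∈ Icc a b, HasDerivAt β (v t (β t)) t) (h : α a = β a) :
    EqOn α β (Icc a b) :=
  ODE_solution_unique hlip (fun t ht => (hα t ht).continuousAt.continuousWithinAt)
    (fun t ht => (hα t (Ico_subset_Icc_self ht)).hasDerivWithinAt)
    (fun t ht => (hβ t ht).continuousAt.continuousWithinAt)
    (fun t ht => (hβ t (Ico_subset_Icc_self ht)).hasDerivWithinAt) h

/-- Solve the equation truncated at the radius of the Grönwall a priori bound, where it is
bounded; the a priori bound then shows that the truncation is never active. -/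
theorem exists_forall_mem_Icc_hasDerivAt_of_norm_le_mul_add [CompleteSpace E] {ρ : ℝ}
    (hcont : ∀ x, Continuous (v · x)) (hlip : ∀ t, LipschitzWith K (v t))
    (hv : ∀ t x, ‖v t x‖ ≤ K * ‖x‖ + ρ) (x₀ : E) (T : ℝ) :
    ∃ α : ℝ → E, α 0 = x₀ ∧ ∀ t ∈ Icc 0 T, HasDerivAt α (v t (α t)) t := by
  have hρ : 0 ≤ ρ := (norm_nonneg _).trans (by simpa using hv 0 0)
  set R := max 1 (gronwallBound ‖x₀‖ K ρ T)
  have hR : 0 < R := lt_max_of_lt_left one_pos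
  set w : ℝ → E → E := fun t x => v t (ballRetraction R x)
  have hw : ∀ t x, ‖w t x‖ ≤ K * ‖x‖ + ρ := fun t x =>
    (hv t _).trans (by gcongr; exact (norm_ballRetraction_le hR x).trans (min_le_right _ _))
  have hw_bdd : ∀ t x, ‖w t x‖ ≤ (K * R + ρ).toNNReal := fun t x =>
    ((hv t _).trans (by gcongr; exact (norm_ballRetraction_le hR x).trans (min_le_left _ _))).trans
      (Real.le_coe_toNNReal _)
  obtain ⟨α, hα0, hα⟩ := exists_forall_mem_Icc_hasDerivAt_of_norm_le (fun x => hcont _)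
    (fun t => (hlip t).comp (lipschitzWith_ballRetraction hR)) hw_bdd x₀ T
  have hαR : ∀ t ∈ Icc 0 T, ‖α t‖ ≤ R := fun t ht =>
    (norm_le_gronwallBound_of_hasDerivAt hw hα le_rfl t ht).trans <| hα0 ▸
      (gronwallBound_mono (norm_nonneg _) hρ K.2 ht.2).trans (le_max_right _ _)
  refine ⟨α, hα0, fun t ht => ?_⟩
  simpa [w, ballRetraction_of_norm_le hR (hαR t ht)] using hα t ht

end GlobalSolutions

lemma mul_sub_le_integral_sub_integral {a : ℝ → ℝ} {a₀ : ℝ} (ha : Continuous a)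
    (h : ∀ x, a₀ ≤ a x) {x y : ℝ} (hxy : x ≤ y) :
    a₀ * (y - x) ≤ (∫ t in (0 : ℝ)..y, a t) - ∫ t in (0 : ℝ)..x, a t := by
  rw [intervalIntegral.integral_interval_sub_left (ha.intervalIntegrable _ _)
    (ha.intervalIntegrable _ _)]
  simpa [mul_comm] using intervalIntegral.integral_mono_on hxy intervalIntegrable_const
    (ha.intervalIntegrable (μ := MeasureTheory.volume) _ _) fun t _ => h t

lemma continuous_invFun_of_mul_sub_le {f : ℝ → ℝ} {m : ℝ} (hm : 0 < m) (hf : Continuous f)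
    (h : ∀ x y, x ≤ y → m * (y - x) ≤ f y - f x) : Continuous (invFun f) := by
  have hmono : StrictMono f := fun x y hxy => by nlinarith [h x y hxy.le]
  have htop : Tendsto f atTop atTop := by
    refine tendsto_atTop_mono' _ ?_ (tendsto_atTop_add_const_left _ (f 0)
      (tendsto_id.const_mul_atTop hm))
    filter_upwards [eventually_ge_atTop 0] with x hx
    rw [id]
    linarith [h 0 x hx]
  have hbot : Tendsto f atBot atBot := by
    refine tendsto_atBot_mono' _ ?_ (tendsto_atBot_add_const_left _ (f 0)
      (tendsto_id.const_mul_atBot hm))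
    filter_upwards [eventually_le_atBot 0] with x hx
    rw [id]
    linarith [h x 0 hx]
  have hsurj := hf.surjective htop hbot
  set e := hmono.orderIsoOfSurjective f hsurj
  have he : invFun f = e.symm := funext fun y =>
    hmono.injective ((rightInverse_invFun hsurj y).trans
      (hmono.orderIsoOfSurjective_self_symm_apply f hsurj y).symm)
  exact he ▸ e.symm.continuous

section FilteredField

open Complex

noncomputable def filteredField (r : ℂ → ℂ) (b θ : ℝ → ℝ) (s : ℝ) (z : ℂ) : ℂ :=
  -(((b s)⁻¹ : ℝ) : ℂ) * exp (-(I * (θ s : ℂ))) * r (exp (I * (θ s : ℂ)) * z)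

lemma norm_neg_inv_mul_exp_neg_I_mul {β : ℝ} (hβ : 0 < β) (x : ℝ) :
    ‖-((β⁻¹ : ℝ) : ℂ) * exp (-(I * x))‖ = β⁻¹ := by
  have h : -(I * x) = I * ((-x : ℝ) : ℂ) := by push_cast; ring
  rw [h, norm_mul, norm_exp_I_mul_ofReal, mul_one, norm_neg, norm_real,
    Real.norm_of_nonneg (inv_nonneg.2 hβ.le)]

variable {r : ℂ → ℂ} {b θ : ℝ → ℝ} {a₀ : ℝ}

lemma lipschitzWith_filteredField {L : ℝ≥0} (hr : LipschitzWith L r) (ha₀ : 0 < a₀)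
    (hb : ∀ s, a₀ ≤ b s) (s : ℝ) : LipschitzWith (L / a₀.toNNReal) (filteredField r b θ s) := by
  have h := (lipschitzWith_smul (-(((b s)⁻¹ : ℝ) : ℂ) * exp (-(I * (θ s : ℂ))))).comp
    (hr.comp (lipschitzWith_smul (exp (I * (θ s : ℂ)))))
  refine h.weaken ?_
  rw [← NNReal.coe_le_coe, NNReal.coe_mul, NNReal.coe_mul, coe_nnnorm, coe_nnnorm,
    norm_neg_inv_mul_exp_neg_I_mul (ha₀.trans_le (hb s)), norm_exp_I_mul_ofReal, mul_one,
    NNReal.coe_div, Real.coe_toNNReal _ ha₀.le, div_eq_inv_mul]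
  gcongr
  exact hb s

lemma norm_filteredField_zero_le (ha₀ : 0 < a₀) (hb : ∀ s, a₀ ≤ b s) (s : ℝ) :
    ‖filteredField r b θ s 0‖ ≤ ‖r 0‖ / a₀ := by
  rw [filteredField, mul_zero, norm_mul, norm_neg_inv_mul_exp_neg_I_mul (ha₀.trans_le (hb s)),
    div_eq_inv_mul]
  gcongr
  exact hb s

lemma norm_filteredField_le {L : ℝ≥0} (hr : LipschitzWith L r) (ha₀ : 0 < a₀)
    (hb : ∀ s, a₀ ≤ b s) (s : ℝ) (z : ℂ) :
    ‖filteredField r b θ s z‖ ≤ (L / a₀.toNNReal : ℝ≥0) * ‖z‖ + ‖r 0‖ / a₀ :=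
  ((lipschitzWith_filteredField hr ha₀ hb s).norm_le_mul_norm_add z).trans
    (by gcongr; exact norm_filteredField_zero_le ha₀ hb s)

lemma continuous_filteredField_apply (hr : Continuous r) (hb : Continuous b)
    (hb0 : ∀ s, b s ≠ 0) (hθ : Continuous θ) (z : ℂ) :
    Continuous (filteredField r b θ · z) := by
  unfold filteredField
  fun_prop (disch := exact hb0 _)

end FilteredField


theorem filtered_profile_wellposed_uniform_bound_general
    (c a₀ T : ℝ) (ha₀ : 0 < a₀) (hT : 0 < T)
    (a : ℝ → ℝ) (ha : Continuous a) (halow : ∀ x, a₀ ≤ a x)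
    (r : ℂ → ℂ) (L : NNReal) (hr : LipschitzWith L r) :
    let A : ℝ → ℝ := fun x => ∫ y in (0:ℝ)..x, a y
    let Φ : ℝ → ℝ → (ℝ → ℝ → ℂ) → ℝ → ℝ → ℂ := fun ε s w x τ =>
      -((((a (Function.invFun A (A x + c * s)))⁻¹ : ℝ)) : ℂ)
        * Complex.exp (-(Complex.I * ((τ + s / ε : ℝ) : ℂ)))
        * r (Complex.exp (Complex.I * ((τ + s / ε : ℝ) : ℂ)) * w x τ)
    let Sol : ℝ → (ℝ → ℝ → ℂ) → (ℝ → ℝ → ℝ → ℂ) → Prop := fun ε W0 Wt =>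
      (∀ x τ : ℝ, Wt 0 x τ = W0 x τ) ∧
      (∀ x τ : ℝ, ∀ s ∈ Set.Icc (0:ℝ) T,
        HasDerivAt (fun s' => Wt s' x τ) (Φ ε s (Wt s) x τ) s) ∧
      (∀ s ∈ Set.Icc (0:ℝ) T, ∃ B : ℝ, ∀ x τ : ℝ, ‖Wt s x τ‖ ≤ B)
    ∃ C > 0, ∀ ε : ℝ, 0 < ε →
      ∀ W0 : ℝ → ℝ → ℂ, (∃ B : ℝ, ∀ x τ : ℝ, ‖W0 x τ‖ ≤ B) →
        -- existence of a global bounded solution on [0,T̄]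
        (∃ Wt, Sol ε W0 Wt) ∧
        -- uniqueness on [0,T̄]
        (∀ Wt₁ Wt₂, Sol ε W0 Wt₁ → Sol ε W0 Wt₂ →
          ∀ s ∈ Set.Icc (0:ℝ) T, ∀ x τ : ℝ, Wt₁ s x τ = Wt₂ s x τ) ∧
        -- ε-uniform L^∞ bound
        (∀ Wt, Sol ε W0 Wt → ∀ M : ℝ, (∀ x τ : ℝ, ‖W0 x τ‖ ≤ M) →
          ∀ s ∈ Set.Icc (0:ℝ) T, ∀ x τ : ℝ, ‖Wt s x τ‖ ≤ C * (1 + M)) := by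
  intro A Φ Sol
  set K := L / a₀.toNNReal
  set ρ := ‖r 0‖ / a₀
  have hinvA : Continuous (invFun A) := continuous_invFun_of_mul_sub_le ha₀
    (intervalIntegral.continuous_primitive (fun _ _ => ha.intervalIntegrable _ _) 0)
    fun _ _ => mul_sub_le_integral_sub_integral ha halow
  set v : ℝ → ℝ → ℝ → ℝ → ℂ → ℂ := fun ε x τ =>
    filteredField r (fun s => a (invFun A (A x + c * s))) (fun s => τ + s / ε)
  have hlip : ∀ ε x τ s, LipschitzWith K (v ε x τ s) := fun _ _ _ =>
    lipschitzWith_filteredField hr ha₀ fun _ => halow _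
  have hgrowth : ∀ ε x τ s z, ‖v ε x τ s z‖ ≤ K * ‖z‖ + ρ := fun _ _ _ =>
    norm_filteredField_le hr ha₀ fun _ => halow _
  have hcont : ∀ ε x τ z, Continuous (v ε x τ · z) := fun _ _ _ =>
    continuous_filteredField_apply hr.continuous (by fun_prop)
      (fun _ => (ha₀.trans_le (halow _)).ne') (by fun_prop)
  have hbound : ∀ ε x τ {α : ℝ → ℂ} {M}, (∀ s ∈ Icc 0 T, HasDerivAt α (v ε x τ s (α s)) s) →
      ‖α 0‖ ≤ M → ∀ s ∈ Icc 0 T, ‖α s‖ ≤ gronwallBound 1 K ρ T * (1 + M) := fun ε x τ =>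
    norm_le_gronwallBound_one_mul_of_hasDerivAt K.2 (by positivity) (hgrowth ε x τ)
  refine ⟨gronwallBound 1 K ρ T, ?_, fun ε _ W0 ⟨B, hB⟩ => ⟨?_, ?_, ?_⟩⟩
  · have h := gronwallBound_mono zero_le_one (by positivity : 0 ≤ ρ) K.2 hT.le
    rw [gronwallBound_x0] at h
    exact one_pos.trans_le h
  · choose α hα0 hα using fun x τ =>
      exists_forall_mem_Icc_hasDerivAt_of_norm_le_mul_add (hcont ε x τ) (hlip ε x τ)
        (hgrowth ε x τ) (W0 x τ) T
    exact ⟨fun s x τ => α x τ s, hα0, hα, fun s hs =>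
      ⟨_, fun x τ => hbound ε x τ (hα x τ) ((hα0 x τ).symm ▸ hB x τ) s hs⟩⟩
  · rintro W₁ W₂ ⟨h₁0, h₁, -⟩ ⟨h₂0, h₂, -⟩ s hs x τ
    exact eqOn_Icc_of_hasDerivAt (hlip ε x τ) (h₁ x τ) (h₂ x τ) (by simp [h₁0, h₂0]) hs
  · rintro W ⟨hW0, hW, -⟩ M hM s hs x τ
    exact hbound ε x τ (hW x τ) ((hW0 x τ).symm ▸ hM x τ) s hs

/-- well-posedness (existence, uniqueness) on `[0,T̄]` of the filtered
profile equation `∂_s W̃ = Φ^ε(s,W̃)`, where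
`Φ^ε(s,w)(x,τ) = -(1/a(x̃)) e^{-iτ̃} r(e^{iτ̃} w(x,τ))`, `x̃ = A⁻¹(A(x)+cs)`,
`τ̃ = τ + s/ε`, in the Banach space of bounded functions of `(x,τ)`, together with an
`ε`-uniform bound `‖W̃(s)‖ ≤ C (1 + ‖W̃(0)‖)`. -/
theorem filtered_profile_wellposed_uniform_bound
    (c a₀ T : ℝ) (hc : 0 < c) (ha₀ : 0 < a₀) (hT : 0 < T)
    (a : ℝ → ℝ) (ha : Continuous a) (halow : ∀ x, a₀ ≤ a x)
    (r : ℂ → ℂ) (L : NNReal) (hr : LipschitzWith L r) :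
    let A : ℝ → ℝ := fun x => ∫ y in (0:ℝ)..x, a y
    let Φ : ℝ → ℝ → (ℝ → ℝ → ℂ) → ℝ → ℝ → ℂ := fun ε s w x τ =>
      -((((a (Function.invFun A (A x + c * s)))⁻¹ : ℝ)) : ℂ)
        * Complex.exp (-(Complex.I * ((τ + s / ε : ℝ) : ℂ)))
        * r (Complex.exp (Complex.I * ((τ + s / ε : ℝ) : ℂ)) * w x τ)
    let Sol : ℝ → (ℝ → ℝ → ℂ) → (ℝ → ℝ → ℝ → ℂ) → Prop := fun ε W0 Wt =>
      (∀ x τ : ℝ, Wt 0 x τ = W0 x τ) ∧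
      (∀ x τ : ℝ, ∀ s ∈ Set.Icc (0:ℝ) T,
        HasDerivAt (fun s' => Wt s' x τ) (Φ ε s (Wt s) x τ) s) ∧
      (∀ s ∈ Set.Icc (0:ℝ) T, ∃ B : ℝ, ∀ x τ : ℝ, ‖Wt s x τ‖ ≤ B)
    ∃ C > 0, ∀ ε : ℝ, 0 < ε →
      ∀ W0 : ℝ → ℝ → ℂ, (∃ B : ℝ, ∀ x τ : ℝ, ‖W0 x τ‖ ≤ B) →
        -- existence of a global bounded solution on [0,T̄]
        (∃ Wt, Sol ε W0 Wt) ∧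
        -- uniqueness on [0,T̄]
        (∀ Wt₁ Wt₂, Sol ε W0 Wt₁ → Sol ε W0 Wt₂ →
          ∀ s ∈ Set.Icc (0:ℝ) T, ∀ x τ : ℝ, Wt₁ s x τ = Wt₂ s x τ) ∧
        -- ε-uniform L^∞ bound
        (∀ Wt, Sol ε W0 Wt → ∀ M : ℝ, (∀ x τ : ℝ, ‖W0 x τ‖ ≤ M) →
          ∀ s ∈ Set.Icc (0:ℝ) T, ∀ x τ : ℝ, ‖Wt s x τ‖ ≤ C * (1 + M)) :=
  filtered_profile_wellposed_uniform_bound_general c a₀ T ha₀ hT a ha halow r L hr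
end

section
/- Let d ≥ 1, U, E : ℝ^d → ℝ be C¹ (with E real valued), b^i, b^± : ℝ^d × ℝ^d → ℂ continuous, ε > 0. Suppose S ∈ C¹ solves ∂_t S + p·∇_x S + ∇_x U·∇_p S = 2E with S(0,x,p) = 0, and (F⁺, F⁻, G^i)(t,x,p,τ), C¹ and 2π-periodic in τ, solve: ∂_t F⁺ + p·∇_x F⁺ − ∇_x(U+E)·∇_p F⁺ = −(𝓔⁺/ε) ∂_τ F⁺ + b̄^i e^{−iτ} G^i + b^i e^{iτ} Ḡ^i; ∂_t F⁻ + p·∇_x F⁻ − ∇_x(U−E)·∇_p F⁻ = −(𝓔⁻/ε) ∂_τ F⁻ − b̄^i e^{−iτ} G^i − b^i e^{iτ} Ḡ^i; ∂_t G^i + p·∇_x G^i + ∇_x U·∇_p G^i = −(2E/ε) ∂_τ G^i + b^i e^{iτ}(F⁻ − F⁺) + (b⁺ − b⁻) G^i, where 𝓔^± = 2E − ∇_x(2U ± E)·∇_p S, and with F^±(0,x,p,0) = f^±_{in}(x,p), G^i(0,x,p,0) = f^i_{in}(x,p). Then f^±(t,x,p) := F^±(t,x,p,S(t,x,p)/ε)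 and f^i(t,x,p) := e^{−iS(t,x,p)/ε} G^i(t,x,p,S(t,x,p)/ε) solve the surface hopping system ∂_t f⁺ + p·∇_x f⁺ − ∇_x(U+E)·∇_p f⁺ = b̄^i f^i + b^i f̄^i; ∂_t f⁻ + p·∇_x f⁻ − ∇_x(U−E)·∇_p f⁻ = −b̄^i f^i − b^i f̄^i; ∂_t f^i + p·∇_x f^i + ∇_x U·∇_p f^i = −(2iE/ε) f^i + b^i (f⁻ − f⁺) + (b⁺ − b⁻) f^i, with the given initial data. -/
/-!
Write `T_w = ∂ₜ + p · ∇ₓ + w · ∇ₚ`. By the chain rule, `T_w` of a filtered profile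
`F(t, x, p, S/ε)` is `T_w F` at the frozen phase `τ = S/ε` plus `(T_w S / ε) ∂_τ F`. The eikonal
equation says `T_{∇U} S = 2E`, and since `-∇(U ± E) = ∇U - ∇(2U ± E)` it gives
`T_{-∇(U ± E)} S = 𝓔^±`: these are exactly the coefficients of `-∂_τ / ε` in the profile
equations, so the fast terms cancel. In `fⁱ` the factor `e^{-iτ}` turns `∂_τ` into `∂_τ - i`,
which leaves the oscillation `-(2iE/ε) fⁱ`.
-/

open RealInnerProductSpace ComplexConjugate

section

variable {Y E F : Type*} [NormedAddCommGroup Y] [NormedSpace ℝ Y] [NormedAddCommGroup E]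
  [NormedSpace ℝ E] [NormedAddCommGroup F] [NormedSpace ℝ F]

theorem fderiv_comp_graph_apply {Ψ : Y → ℝ → F} {σ : Y → ℝ} {y : Y}
    (hΨ : DifferentiableAt ℝ (fun q : Y × ℝ => Ψ q.1 q.2) (y, σ y))
    (hσ : DifferentiableAt ℝ σ y) (v : Y) :
    fderiv ℝ (fun y' => Ψ y' (σ y')) y v
      = fderiv ℝ (fun y' => Ψ y' (σ y)) y v + fderiv ℝ σ y v • deriv (Ψ y) (σ y) := by
  have hD := hΨ.hasFDerivAt
  set D := fderiv ℝ (fun q : Y × ℝ => Ψ q.1 q.2) (y, σ y)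
  have h_total : fderiv ℝ (fun y' => Ψ y' (σ y')) y
      = D.comp ((ContinuousLinearMap.id ℝ Y).prod (fderiv ℝ σ y)) :=
    (hD.comp (f := fun y' => (y', σ y')) y
      ((hasFDerivAt_id y).prodMk hσ.hasFDerivAt)).fderiv
  have h_frozen : fderiv ℝ (fun y' => Ψ y' (σ y)) y
      = D.comp ((ContinuousLinearMap.id ℝ Y).prod 0) :=
    (hD.comp (f := fun y' => (y', σ y)) y
      ((hasFDerivAt_id y).prodMk (hasFDerivAt_const (σ y) y))).fderiv
  have h_fibre : deriv (Ψ y) (σ y) = D (0, 1) :=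
    (hD.comp_hasDerivAt (σ y) ((hasDerivAt_const (σ y) y).prodMk (hasDerivAt_id (σ y)))).deriv
  simp only [h_total, h_frozen, h_fibre, ← map_smul, ContinuousLinearMap.comp_apply,
    ContinuousLinearMap.prod_apply, ContinuousLinearMap.id_apply, zero_apply]
  rw [← map_add, Prod.smul_mk, Prod.mk_add_mk, smul_zero, smul_eq_mul, mul_one, add_zero, zero_add]

noncomputable def transportDeriv (w : E) (f : ℝ → E → E → F) (t : ℝ) (x p : E) : F :=
  deriv (fun t' => f t' x p) t + fderiv ℝ (fun x' => f t x' p) x p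
    + fderiv ℝ (fun p' => f t x p') p w

theorem transportDeriv_neg (w : E) (f : ℝ → E → E → F) (t : ℝ) (x p : E) :
    transportDeriv (-w) f t x p
      = deriv (fun t' => f t' x p) t + fderiv ℝ (fun x' => f t x' p) x p
        - fderiv ℝ (fun p' => f t x p') p w := by
  rw [transportDeriv, map_neg, sub_eq_add_neg]

theorem transportDeriv_const_smul {𝕝 : Type*} [DivisionSemiring 𝕝] [Module 𝕝 F]
    [SMulCommClass ℝ 𝕝 F] [ContinuousConstSMul 𝕝 F] (c : 𝕝) (w : E) (f : ℝ → E → E → F)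
    (t : ℝ) (x p : E) :
    transportDeriv w (fun t x p => c • f t x p) t x p = c • transportDeriv w f t x p := by
  simp only [transportDeriv, deriv_fun_const_smul_field, smul_add]
  rw [show (fun x' => c • f t x' p) = c • fun x' => f t x' p from rfl,
    show (fun p' => c • f t x p') = c • fun p' => f t x p' from rfl,
    fderiv_const_smul_field, fderiv_const_smul_field]
  rfl

theorem transportDeriv_comp_phase {Φ : ℝ → E → E → ℝ → F} {θ : ℝ → E → E → ℝ} {w : E} {t : ℝ}
    {x p : E}
    (hΦ : DifferentiableAt ℝ (fun q : ℝ × E × E × ℝ => Φ q.1 q.2.1 q.2.2.1 q.2.2.2)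
      (t, x, p, θ t x p))
    (hθ : DifferentiableAt ℝ (fun q : ℝ × E × E => θ q.1 q.2.1 q.2.2) (t, x, p)) :
    transportDeriv w (fun t x p => Φ t x p (θ t x p)) t x p
      = transportDeriv w (fun t' x' p' => Φ t' x' p' (θ t x p)) t x p
        + transportDeriv w θ t x p • deriv (Φ t x p) (θ t x p) := by
  have h_t := fderiv_comp_graph_apply (Ψ := fun t' τ => Φ t' x p τ) (σ := fun t' => θ t' x p)
    (hΦ.comp (f := fun q : ℝ × ℝ => (q.1, x, p, q.2)) (t, θ t x p) (by fun_prop))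
    (hθ.comp (f := fun t' : ℝ => (t', x, p)) t (by fun_prop)) 1
  have h_x := fderiv_comp_graph_apply (Ψ := fun x' τ => Φ t x' p τ) (σ := fun x' => θ t x' p)
    (hΦ.comp (f := fun q : E × ℝ => (t, q.1, p, q.2)) (x, θ t x p) (by fun_prop))
    (hθ.comp (f := fun x' : E => (t, x', p)) x (by fun_prop)) p
  have h_p := fderiv_comp_graph_apply (Ψ := fun p' τ => Φ t x p' τ) (σ := fun p' => θ t x p')
    (hΦ.comp (f := fun q : E × ℝ => (t, x, q.1, q.2)) (p, θ t x p) (by fun_prop))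
    (hθ.comp (f := fun p' : E => (t, x, p')) p (by fun_prop)) w
  simp only [fderiv_apply_one_eq_deriv] at h_t
  simp only [transportDeriv, h_t, h_x, h_p, add_smul]
  abel

theorem transportDeriv_comp_phase_div {Φ : ℝ → E → E → ℝ → F} {S : ℝ → E → E → ℝ} {w : E}
    {t : ℝ} {x p : E} {ε : ℝ}
    (hΦ : DifferentiableAt ℝ (fun q : ℝ × E × E × ℝ => Φ q.1 q.2.1 q.2.2.1 q.2.2.2)
      (t, x, p, S t x p / ε))
    (hS : DifferentiableAt ℝ (fun q : ℝ × E × E => S q.1 q.2.1 q.2.2) (t, x, p)) :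
    transportDeriv w (fun t x p => Φ t x p (S t x p / ε)) t x p
      = transportDeriv w (fun t' x' p' => Φ t' x' p' (S t x p / ε)) t x p
        + (transportDeriv w S t x p / ε) • deriv (fun τ' => Φ t x p τ') (S t x p / ε) := by
  have h_phase :
      transportDeriv w (fun t x p => S t x p / ε) t x p = transportDeriv w S t x p / ε := by
    simpa only [smul_eq_mul, ← div_eq_inv_mul] using transportDeriv_const_smul ε⁻¹ w S t x p
  rw [transportDeriv_comp_phase (θ := fun t x p => S t x p / ε) hΦ (by fun_prop), h_phase]

end

section

variable {E : Type*} [NormedAddCommGroup E] [InnerProductSpace ℝ E] [CompleteSpace E]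

theorem transportDeriv_neg_gradient {U A B : E → ℝ} {S : ℝ → E → E → ℝ} {t : ℝ} {x p : E}
    {c : ℝ} (hU : DifferentiableAt ℝ U x) (hA : DifferentiableAt ℝ A x)
    (hB : ∀ y, B y = U y + A y) (hS : transportDeriv (gradient U x) S t x p = c) :
    transportDeriv (-gradient A x) S t x p
      = c - ⟪gradient B x, gradient (fun p' => S t x p') p⟫ := by
  have h_sym : ∀ V : E → ℝ, fderiv ℝ (fun p' => S t x p') p (gradient V x)
      = fderiv ℝ V x (gradient (fun p' => S t x p') p) := fun V => by
    rw [← inner_gradient_left, ← inner_gradient_left, real_inner_comm]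
  rw [← hS, inner_gradient_left, funext hB, fderiv_fun_add hU hA]
  simp only [transportDeriv, map_neg, h_sym, add_apply]
  ring

theorem transportDeriv_neg_gradient_comp_phase_div {Φ : ℝ → E → E → ℝ → ℂ} {U A B : E → ℝ}
    {S : ℝ → E → E → ℝ} {t : ℝ} {x p : E} {ε c : ℝ}
    (hΦ : DifferentiableAt ℝ (fun q : ℝ × E × E × ℝ => Φ q.1 q.2.1 q.2.2.1 q.2.2.2)
      (t, x, p, S t x p / ε))
    (hS : DifferentiableAt ℝ (fun q : ℝ × E × E => S q.1 q.2.1 q.2.2) (t, x, p))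
    (hU : DifferentiableAt ℝ U x) (hA : DifferentiableAt ℝ A x)
    (hB : ∀ y, B y = U y + A y) (hSU : transportDeriv (gradient U x) S t x p = c) :
    transportDeriv (-gradient A x) (fun t x p => Φ t x p (S t x p / ε)) t x p
      = transportDeriv (-gradient A x) (fun t' x' p' => Φ t' x' p' (S t x p / ε)) t x p
        + (((c - ⟪gradient B x, gradient (fun p' => S t x p') p⟫) / ε : ℝ) : ℂ)
          * deriv (fun τ' => Φ t x p τ') (S t x p / ε) := by
  rw [transportDeriv_comp_phase_div hΦ hS, transportDeriv_neg_gradient hU hA hB hSU,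
    Complex.real_smul]

end

section

variable {E : Type*} [NormedAddCommGroup E] [NormedSpace ℝ E]

open Complex

theorem deriv_cexp_neg_I_mul {g : ℝ → ℂ} {τ : ℝ} (hg : DifferentiableAt ℝ g τ) :
    deriv (fun τ' : ℝ => exp (-(I * τ')) * g τ') τ = exp (-(I * τ)) * (deriv g τ - I * g τ) := by
  have h_exp : HasDerivAt (fun τ' : ℝ => exp (-(I * τ'))) (exp (-(I * τ)) * -I) τ := by
    simpa using (((hasDerivAt_id τ).ofReal_comp.const_mul I).neg).cexp
  rw [(h_exp.fun_mul hg.hasDerivAt).deriv]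
  ring

theorem transportDeriv_exp_mul_comp_phase_div {G : ℝ → E → E → ℝ → ℂ} {S : ℝ → E → E → ℝ}
    {w : E} {t : ℝ} {x p : E} {ε : ℝ}
    (hG : DifferentiableAt ℝ (fun q : ℝ × E × E × ℝ => G q.1 q.2.1 q.2.2.1 q.2.2.2)
      (t, x, p, S t x p / ε))
    (hS : DifferentiableAt ℝ (fun q : ℝ × E × E => S q.1 q.2.1 q.2.2) (t, x, p)) :
    transportDeriv w
        (fun t x p => exp (-(I * ((S t x p / ε : ℝ) : ℂ))) * G t x p (S t x p / ε)) t x p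
      = exp (-(I * ((S t x p / ε : ℝ) : ℂ)))
        * (transportDeriv w (fun t' x' p' => G t' x' p' (S t x p / ε)) t x p
          + ((transportDeriv w S t x p / ε : ℝ) : ℂ)
            * (deriv (fun τ' => G t x p τ') (S t x p / ε) - I * G t x p (S t x p / ε))) := by
  have hΦ : DifferentiableAt ℝ
      (fun q : ℝ × E × E × ℝ => exp (-(I * q.2.2.2)) * G q.1 q.2.1 q.2.2.1 q.2.2.2)
      (t, x, p, S t x p / ε) :=
    (by fun_prop : DifferentiableAt ℝ (fun q : ℝ × E × E × ℝ => exp (-(I * q.2.2.2))) _).mul hG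
  have hGτ : DifferentiableAt ℝ (fun τ' => G t x p τ') (S t x p / ε) :=
    hG.comp (f := fun τ' : ℝ => (t, x, p, τ')) _ (by fun_prop)
  have h_frozen : transportDeriv w
      (fun t' x' p' => exp (-(I * ((S t x p / ε : ℝ) : ℂ))) * G t' x' p' (S t x p / ε)) t x p
      = exp (-(I * ((S t x p / ε : ℝ) : ℂ)))
        * transportDeriv w (fun t' x' p' => G t' x' p' (S t x p / ε)) t x p :=
    transportDeriv_const_smul (exp (-(I * ((S t x p / ε : ℝ) : ℂ)))) w
      (fun t' x' p' => G t' x' p' (S t x p / ε)) t x p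
  rw [transportDeriv_comp_phase_div (Φ := fun t x p τ => exp (-(I * τ)) * G t x p τ) hΦ hS,
    deriv_cexp_neg_I_mul hGτ, Complex.real_smul, h_frozen]
  ring

end

theorem ngo_consistency_surface_hopping_general
    (d : ℕ)
    (Upot Epot : EuclideanSpace ℝ (Fin d) → ℝ)
    (hU : ContDiff ℝ 1 Upot) (hEc : ContDiff ℝ 1 Epot)
    (bi bp bm : EuclideanSpace ℝ (Fin d) → EuclideanSpace ℝ (Fin d) → ℂ)
    (ε : ℝ)
    (fpin fmin fiin : EuclideanSpace ℝ (Fin d) → EuclideanSpace ℝ (Fin d) → ℂ)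
    (S : ℝ → EuclideanSpace ℝ (Fin d) → EuclideanSpace ℝ (Fin d) → ℝ)
    (hS : ContDiff ℝ 1
      (fun q : ℝ × EuclideanSpace ℝ (Fin d) × EuclideanSpace ℝ (Fin d) =>
        S q.1 q.2.1 q.2.2))
    (hSeq : ∀ t x p,
      deriv (fun t' => S t' x p) t + (fderiv ℝ (fun x' => S t x' p) x) p
        + ⟪gradient Upot x, gradient (fun p' => S t x p') p⟫
        = 2 * Epot x)
    (hS0 : ∀ x p, S 0 x p = 0)
    (Fp Fm Gi : ℝ → EuclideanSpace ℝ (Fin d) → EuclideanSpace ℝ (Fin d) → ℝ → ℂ)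
    (hFp : ContDiff ℝ 1
      (fun q : ℝ × EuclideanSpace ℝ (Fin d) × EuclideanSpace ℝ (Fin d) × ℝ =>
        Fp q.1 q.2.1 q.2.2.1 q.2.2.2))
    (hFm : ContDiff ℝ 1
      (fun q : ℝ × EuclideanSpace ℝ (Fin d) × EuclideanSpace ℝ (Fin d) × ℝ =>
        Fm q.1 q.2.1 q.2.2.1 q.2.2.2))
    (hGi : ContDiff ℝ 1
      (fun q : ℝ × EuclideanSpace ℝ (Fin d) × EuclideanSpace ℝ (Fin d) × ℝ =>
        Gi q.1 q.2.1 q.2.2.1 q.2.2.2))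
    (hFpeq : ∀ t x p (τ : ℝ),
      deriv (fun t' => Fp t' x p τ) t + (fderiv ℝ (fun x' => Fp t x' p τ) x) p
        - (fderiv ℝ (fun p' => Fp t x p' τ) p) (gradient (fun y => Upot y + Epot y) x)
        = -(((2 * Epot x
              - ⟪gradient (fun y => 2 * Upot y + Epot y) x,
                  gradient (fun p' => S t x p') p⟫) / ε : ℝ) : ℂ)
              * deriv (fun τ' => Fp t x p τ') τ
          + conj (bi x p) * Complex.exp (-(Complex.I * τ)) * Gi t x p τ
          + bi x p * Complex.exp (Complex.I * τ) * conj (Gi t x p τ))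
    (hFmeq : ∀ t x p (τ : ℝ),
      deriv (fun t' => Fm t' x p τ) t + (fderiv ℝ (fun x' => Fm t x' p τ) x) p
        - (fderiv ℝ (fun p' => Fm t x p' τ) p) (gradient (fun y => Upot y - Epot y) x)
        = -(((2 * Epot x
              - ⟪gradient (fun y => 2 * Upot y - Epot y) x,
                  gradient (fun p' => S t x p') p⟫) / ε : ℝ) : ℂ)
              * deriv (fun τ' => Fm t x p τ') τ
          - conj (bi x p) * Complex.exp (-(Complex.I * τ)) * Gi t x p τ
          - bi x p * Complex.exp (Complex.I * τ) * conj (Gi t x p τ))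
    (hGieq : ∀ t x p (τ : ℝ),
      deriv (fun t' => Gi t' x p τ) t + (fderiv ℝ (fun x' => Gi t x' p τ) x) p
        + (fderiv ℝ (fun p' => Gi t x p' τ) p) (gradient Upot x)
        = -((2 * Epot x / ε : ℝ) : ℂ) * deriv (fun τ' => Gi t x p τ') τ
          + bi x p * Complex.exp (Complex.I * τ) * (Fm t x p τ - Fp t x p τ)
          + (bp x p - bm x p) * Gi t x p τ)
    (hFp0 : ∀ x p, Fp 0 x p 0 = fpin x p)
    (hFm0 : ∀ x p, Fm 0 x p 0 = fmin x p)
    (hGi0 : ∀ x p, Gi 0 x p 0 = fiin x p) :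
    let fp : ℝ → EuclideanSpace ℝ (Fin d) → EuclideanSpace ℝ (Fin d) → ℂ :=
      fun t x p => Fp t x p (S t x p / ε)
    let fm : ℝ → EuclideanSpace ℝ (Fin d) → EuclideanSpace ℝ (Fin d) → ℂ :=
      fun t x p => Fm t x p (S t x p / ε)
    let fi : ℝ → EuclideanSpace ℝ (Fin d) → EuclideanSpace ℝ (Fin d) → ℂ :=
      fun t x p =>
        Complex.exp (-(Complex.I * ((S t x p / ε : ℝ) : ℂ))) * Gi t x p (S t x p / ε)
    (∀ t x p,
      deriv (fun t' => fp t' x p) t + (fderiv ℝ (fun x' => fp t x' p) x) p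
        - (fderiv ℝ (fun p' => fp t x p') p) (gradient (fun y => Upot y + Epot y) x)
        = conj (bi x p) * fi t x p + bi x p * conj (fi t x p)) ∧
    (∀ t x p,
      deriv (fun t' => fm t' x p) t + (fderiv ℝ (fun x' => fm t x' p) x) p
        - (fderiv ℝ (fun p' => fm t x p') p) (gradient (fun y => Upot y - Epot y) x)
        = -(conj (bi x p) * fi t x p) - bi x p * conj (fi t x p)) ∧
    (∀ t x p,
      deriv (fun t' => fi t' x p) t + (fderiv ℝ (fun x' => fi t x' p) x) p
        + (fderiv ℝ (fun p' => fi t x p') p) (gradient Upot x)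
        = -(2 * Complex.I * (Epot x : ℂ) / (ε : ℂ)) * fi t x p
          + bi x p * (fm t x p - fp t x p)
          + (bp x p - bm x p) * fi t x p) ∧
    (∀ x p, fp 0 x p = fpin x p ∧ fm 0 x p = fmin x p ∧ fi 0 x p = fiin x p) := by
  intro fp fm fi
  have hUd := hU.differentiable one_ne_zero
  have hEd := hEc.differentiable one_ne_zero
  have hS_char : ∀ t x p, transportDeriv (gradient Upot x) S t x p = 2 * Epot x := fun t x p => by
    rw [transportDeriv, ← inner_gradient_left (f := fun p' => S t x p'), real_inner_comm]
    exact hSeq t x p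
  have h_conj : ∀ t x p, conj (fi t x p)
      = Complex.exp (Complex.I * ((S t x p / ε : ℝ) : ℂ)) * conj (Gi t x p (S t x p / ε)) :=
    fun t x p => by simp [fi, ← Complex.exp_conj]
  refine ⟨fun t x p => ?_, fun t x p => ?_, fun t x p => ?_, fun x p => ?_⟩
  · have h := transportDeriv_neg_gradient_comp_phase_div (A := fun y => Upot y + Epot y)
      (B := fun y => 2 * Upot y + Epot y) (ε := ε) (hFp.differentiable one_ne_zero _)
      (hS.differentiable one_ne_zero _) (hUd x) (by fun_prop) (fun y => by ring) (hS_char t x p)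
    rw [transportDeriv_neg, transportDeriv_neg, hFpeq] at h
    exact h.trans (by rw [h_conj]; ring)
  · have h := transportDeriv_neg_gradient_comp_phase_div (A := fun y => Upot y - Epot y)
      (B := fun y => 2 * Upot y - Epot y) (ε := ε) (hFm.differentiable one_ne_zero _)
      (hS.differentiable one_ne_zero _) (hUd x) (by fun_prop) (fun y => by ring) (hS_char t x p)
    rw [transportDeriv_neg, transportDeriv_neg, hFmeq] at h
    exact h.trans (by rw [h_conj]; ring)
  · have h := transportDeriv_exp_mul_comp_phase_div (w := gradient Upot x) (ε := ε)
      (hGi.differentiable one_ne_zero _) (hS.differentiable one_ne_zero (t, x, p))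
    have hG_frozen : transportDeriv (gradient Upot x)
        (fun t' x' p' => Gi t' x' p' (S t x p / ε)) t x p = _ := hGieq t x p _
    rw [hS_char, hG_frozen] at h
    have h_unit : Complex.exp (-(Complex.I * ((S t x p / ε : ℝ) : ℂ)))
        * Complex.exp (Complex.I * ((S t x p / ε : ℝ) : ℂ)) = 1 := by
      rw [← Complex.exp_add, neg_add_cancel, Complex.exp_zero]
    refine h.trans ?_
    simp only [fp, fm, fi]
    push_cast at h_unit ⊢
    linear_combination (bi x p * (Fm t x p (S t x p / ε) - Fp t x p (S t x p / ε))) * h_unit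
  · simp [fp, fm, fi, hS0, hFp0, hFm0, hGi0]

/-- consistency of the nonlinear geometric optics reformulation for the
semiclassical surface hopping model.  If the phase `S` solves
`∂_t S + p·∇ₓS + ∇ₓU·∇ₚS = 2E`, `S(0) = 0`, and the `2π`-periodic profiles
`(F⁺, F⁻, Gⁱ)` solve the augmented system, then `f^± = F^±(·,S/ε)` and
`fⁱ = e^{-iS/ε} Gⁱ(·,S/ε)` solve the surface hopping system. -/
theorem ngo_consistency_surface_hopping
    (d : ℕ) (hd : 1 ≤ d)
    (Upot Epot : EuclideanSpace ℝ (Fin d) → ℝ)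
    (hU : ContDiff ℝ 1 Upot) (hEc : ContDiff ℝ 1 Epot)
    (bi bp bm : EuclideanSpace ℝ (Fin d) → EuclideanSpace ℝ (Fin d) → ℂ)
    (hbi : Continuous fun q : EuclideanSpace ℝ (Fin d) × EuclideanSpace ℝ (Fin d) =>
      bi q.1 q.2)
    (hbp : Continuous fun q : EuclideanSpace ℝ (Fin d) × EuclideanSpace ℝ (Fin d) =>
      bp q.1 q.2)
    (hbm : Continuous fun q : EuclideanSpace ℝ (Fin d) × EuclideanSpace ℝ (Fin d) =>
      bm q.1 q.2)
    (ε : ℝ) (hε : 0 < ε)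
    (fpin fmin fiin : EuclideanSpace ℝ (Fin d) → EuclideanSpace ℝ (Fin d) → ℂ)
    (S : ℝ → EuclideanSpace ℝ (Fin d) → EuclideanSpace ℝ (Fin d) → ℝ)
    (hS : ContDiff ℝ 1
      (fun q : ℝ × EuclideanSpace ℝ (Fin d) × EuclideanSpace ℝ (Fin d) =>
        S q.1 q.2.1 q.2.2))
    (hSeq : ∀ t x p,
      deriv (fun t' => S t' x p) t + (fderiv ℝ (fun x' => S t x' p) x) p
        + ⟪gradient Upot x, gradient (fun p' => S t x p') p⟫
        = 2 * Epot x)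
    (hS0 : ∀ x p, S 0 x p = 0)
    (Fp Fm Gi : ℝ → EuclideanSpace ℝ (Fin d) → EuclideanSpace ℝ (Fin d) → ℝ → ℂ)
    (hFp : ContDiff ℝ 1
      (fun q : ℝ × EuclideanSpace ℝ (Fin d) × EuclideanSpace ℝ (Fin d) × ℝ =>
        Fp q.1 q.2.1 q.2.2.1 q.2.2.2))
    (hFm : ContDiff ℝ 1
      (fun q : ℝ × EuclideanSpace ℝ (Fin d) × EuclideanSpace ℝ (Fin d) × ℝ =>
        Fm q.1 q.2.1 q.2.2.1 q.2.2.2))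
    (hGi : ContDiff ℝ 1
      (fun q : ℝ × EuclideanSpace ℝ (Fin d) × EuclideanSpace ℝ (Fin d) × ℝ =>
        Gi q.1 q.2.1 q.2.2.1 q.2.2.2))
    (hFpper : ∀ t x p τ, Fp t x p (τ + 2 * Real.pi) = Fp t x p τ)
    (hFmper : ∀ t x p τ, Fm t x p (τ + 2 * Real.pi) = Fm t x p τ)
    (hGiper : ∀ t x p τ, Gi t x p (τ + 2 * Real.pi) = Gi t x p τ)
    (hFpeq : ∀ t x p (τ : ℝ),
      deriv (fun t' => Fp t' x p τ) t + (fderiv ℝ (fun x' => Fp t x' p τ) x) p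
        - (fderiv ℝ (fun p' => Fp t x p' τ) p) (gradient (fun y => Upot y + Epot y) x)
        = -(((2 * Epot x
              - ⟪gradient (fun y => 2 * Upot y + Epot y) x,
                  gradient (fun p' => S t x p') p⟫) / ε : ℝ) : ℂ)
              * deriv (fun τ' => Fp t x p τ') τ
          + conj (bi x p) * Complex.exp (-(Complex.I * τ)) * Gi t x p τ
          + bi x p * Complex.exp (Complex.I * τ) * conj (Gi t x p τ))
    (hFmeq : ∀ t x p (τ : ℝ),
      deriv (fun t' => Fm t' x p τ) t + (fderiv ℝ (fun x' => Fm t x' p τ) x) p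
        - (fderiv ℝ (fun p' => Fm t x p' τ) p) (gradient (fun y => Upot y - Epot y) x)
        = -(((2 * Epot x
              - ⟪gradient (fun y => 2 * Upot y - Epot y) x,
                  gradient (fun p' => S t x p') p⟫) / ε : ℝ) : ℂ)
              * deriv (fun τ' => Fm t x p τ') τ
          - conj (bi x p) * Complex.exp (-(Complex.I * τ)) * Gi t x p τ
          - bi x p * Complex.exp (Complex.I * τ) * conj (Gi t x p τ))
    (hGieq : ∀ t x p (τ : ℝ),
      deriv (fun t' => Gi t' x p τ) t + (fderiv ℝ (fun x' => Gi t x' p τ) x) p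
        + (fderiv ℝ (fun p' => Gi t x p' τ) p) (gradient Upot x)
        = -((2 * Epot x / ε : ℝ) : ℂ) * deriv (fun τ' => Gi t x p τ') τ
          + bi x p * Complex.exp (Complex.I * τ) * (Fm t x p τ - Fp t x p τ)
          + (bp x p - bm x p) * Gi t x p τ)
    (hFp0 : ∀ x p, Fp 0 x p 0 = fpin x p)
    (hFm0 : ∀ x p, Fm 0 x p 0 = fmin x p)
    (hGi0 : ∀ x p, Gi 0 x p 0 = fiin x p) :
    let fp : ℝ → EuclideanSpace ℝ (Fin d) → EuclideanSpace ℝ (Fin d) → ℂ :=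
      fun t x p => Fp t x p (S t x p / ε)
    let fm : ℝ → EuclideanSpace ℝ (Fin d) → EuclideanSpace ℝ (Fin d) → ℂ :=
      fun t x p => Fm t x p (S t x p / ε)
    let fi : ℝ → EuclideanSpace ℝ (Fin d) → EuclideanSpace ℝ (Fin d) → ℂ :=
      fun t x p =>
        Complex.exp (-(Complex.I * ((S t x p / ε : ℝ) : ℂ))) * Gi t x p (S t x p / ε)
    (∀ t x p,
      deriv (fun t' => fp t' x p) t + (fderiv ℝ (fun x' => fp t x' p) x) p
        - (fderiv ℝ (fun p' => fp t x p') p) (gradient (fun y => Upot y + Epot y) x)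
        = conj (bi x p) * fi t x p + bi x p * conj (fi t x p)) ∧
    (∀ t x p,
      deriv (fun t' => fm t' x p) t + (fderiv ℝ (fun x' => fm t x' p) x) p
        - (fderiv ℝ (fun p' => fm t x p') p) (gradient (fun y => Upot y - Epot y) x)
        = -(conj (bi x p) * fi t x p) - bi x p * conj (fi t x p)) ∧
    (∀ t x p,
      deriv (fun t' => fi t' x p) t + (fderiv ℝ (fun x' => fi t x' p) x) p
        + (fderiv ℝ (fun p' => fi t x p') p) (gradient Upot x)
        = -(2 * Complex.I * (Epot x : ℂ) / (ε : ℂ)) * fi t x p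
          + bi x p * (fm t x p - fp t x p)
          + (bp x p - bm x p) * fi t x p) ∧
    (∀ x p, fp 0 x p = fpin x p ∧ fm 0 x p = fmin x p ∧ fi 0 x p = fiin x p) :=
  ngo_consistency_surface_hopping_general d Upot Epot hU hEc bi bp bm ε fpin fmin fiin S hS hSeq hS0
    Fp Fm Gi hFp hFm hGi hFpeq hFmeq hGieq hFp0 hFm0 hGi0
end
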